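/- Let S be an acyclic set over a finite alphabet A, let X ⊆ S be a finite bifix code with coding morphism f : B* → A* (f maps the alphabet B bijectively onto X). If the bifix decoding f⁻¹(S) is biextendable, then f⁻¹(S) is acyclic. -/

import Mathlib

open List

/-- `u` is a factor of `v`. -/
def IsFactor {A : Type*} (u v : List A) : Prop := ∃ p s : List A, v = p ++ u ++ s

/-- A set of words is factorial if it contains the factors of its elements. -/
def Factorial {A : Type*} (S : Set (List A)) : Prop :=
  ∀ v ∈ S, ∀ u : List A, IsFactor u v → u ∈ S

/-- Left extensions of `w` in `S` taken inside the set `U`. -/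
def leftExts {A : Type*} (S U : Set (List A)) (w : List A) : Set (List A) :=
  {l | l ∈ U ∧ l ++ w ∈ S}

/-- Right extensions of `w` in `S` taken inside the set `V`. -/
def rightExts {A : Type*} (S V : Set (List A)) (w : List A) : Set (List A) :=
  {r | r ∈ V ∧ w ++ r ∈ S}

/-- The generalized extension graph `E_{U,V}(w)`: a bipartite undirected graph on the
disjoint union of `U(w)` and `V(w)`, with an edge between `l` and `r` iff `l ++ w ++ r ∈ S`. -/
def ExtGraph {A : Type*} (S U V : Set (List A)) (w : List A) :
    SimpleGraph (↥(leftExts S U w) ⊕ ↥(rightExts S V w)) where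
  Adj x y :=
    (∃ l r, x = Sum.inl l ∧ y = Sum.inr r ∧ l.val ++ w ++ r.val ∈ S) ∨
    (∃ l r, x = Sum.inr r ∧ y = Sum.inl l ∧ l.val ++ w ++ r.val ∈ S)
  symm := by
    constructor
    rintro x y (⟨l, r, hx, hy, h⟩ | ⟨l, r, hx, hy, h⟩)
    · exact Or.inr ⟨l, r, hy, hx, h⟩
    · exact Or.inl ⟨l, r, hy, hx, h⟩
  loopless := by
    constructor
    rintro x (⟨l, r, hx, hy, _⟩ | ⟨l, r, hx, hy, _⟩) <;> subst hx <;> simp at hy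

/-- The set of one-letter words. -/
def letterWords (A : Type*) : Set (List A) := Set.range fun a : A => [a]

/-- The extension graph `E(w)` of `w` in `S` (extensions by letters). -/
def EGraph {A : Type*} (S : Set (List A)) (w : List A) :=
  ExtGraph S (letterWords A) (letterWords A) w

/-- `S` is biextendable: factorial and every word extends on both sides by a letter. -/
def Biext {A : Type*} (S : Set (List A)) : Prop :=
  Factorial S ∧ ∀ w ∈ S, ∃ a b : A, a :: (w ++ [b]) ∈ S

/-- `S` is an acyclic set. -/
def SAcyclic {A : Type*} (S : Set (List A)) : Prop :=
  Biext S ∧ ∀ w ∈ S, (EGraph S w).IsAcyclic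

/-- `S` is a connected set. -/
def SConn {A : Type*} (S : Set (List A)) : Prop :=
  Biext S ∧ ∀ w ∈ S, (EGraph S w).Connected

/-- `S` is a tree set. -/
def STree {A : Type*} (S : Set (List A)) : Prop :=
  Biext S ∧ ∀ w ∈ S, (EGraph S w).IsTree

/-- A prefix code: nonempty words, none a proper prefix of another. -/
def IsPrefixCode {A : Type*} (X : Set (List A)) : Prop :=
  (∀ x ∈ X, x ≠ []) ∧ ∀ x ∈ X, ∀ y ∈ X, x <+: y → x = y

/-- A suffix code: nonempty words, none a proper suffix of another. -/
def IsSuffixCode {A : Type*} (X : Set (List A)) : Prop :=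
  (∀ x ∈ X, x ≠ []) ∧ ∀ x ∈ X, ∀ y ∈ X, x <:+ y → x = y

/-- A bifix code. -/
def IsBifixCode {A : Type*} (X : Set (List A)) : Prop :=
  IsPrefixCode X ∧ IsSuffixCode X

/-- An `S`-maximal prefix code. -/
def IsSMaxPrefixCode {A : Type*} (S X : Set (List A)) : Prop :=
  IsPrefixCode X ∧ X ⊆ S ∧ ∀ Y : Set (List A), IsPrefixCode Y → Y ⊆ S → X ⊆ Y → X = Y

/-- An `S`-maximal suffix code. -/
def IsSMaxSuffixCode {A : Type*} (S X : Set (List A)) : Prop :=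
  IsSuffixCode X ∧ X ⊆ S ∧ ∀ Y : Set (List A), IsSuffixCode Y → Y ⊆ S → X ⊆ Y → X = Y

/-- An `S`-maximal bifix code. -/
def IsSMaxBifixCode {A : Type*} (S X : Set (List A)) : Prop :=
  IsBifixCode X ∧ X ⊆ S ∧ ∀ Y : Set (List A), IsBifixCode Y → Y ⊆ S → X ⊆ Y → X = Y

/-- The canonical embedding of words over `A` into the free group `F_A`. -/
def toFG {A : Type*} (w : List A) : FreeGroup A := (w.map FreeGroup.of).prod

/-- A subset of a group is free if it is a basis of the subgroup it generates, i.e. the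
induced morphism from the free group over it is injective. -/
def IsFreeSubset {G : Type*} [Group G] (X : Set G) : Prop :=
  Function.Injective ⇑(FreeGroup.lift fun x : X => (x : G))

/-- The submonoid `X*` of `A*` generated by `X`, as a set of words. -/
def star {A : Type*} (X : Set (List A)) : Set (List A) :=
  {w | ∃ l : List (List A), (∀ u ∈ l, u ∈ X) ∧ w = l.flatten}

/-- Every word of `S` is right-extendable by a letter. -/
def RightExtendable {A : Type*} (S : Set (List A)) : Prop :=
  ∀ w ∈ S, ∃ a : A, w ++ [a] ∈ S

/-- `S` is uniformly recurrent. -/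
def UnifRecurrent {A : Type*} (S : Set (List A)) : Prop :=
  RightExtendable S ∧
    ∀ u ∈ S, ∃ n : ℕ, 1 ≤ n ∧ ∀ v ∈ S, v.length = n → IsFactor u v

/-- `S` is recurrent. -/
def Recurrent {A : Type*} (S : Set (List A)) : Prop :=
  S ≠ {([] : List A)} ∧ Factorial S ∧ ∀ u ∈ S, ∀ w ∈ S, ∃ v ∈ S, u ++ v ++ w ∈ S

/-- The set `Γ_S(w)` of right return words to `w`. -/
def retWords {A : Type*} (S : Set (List A)) (w : List A) : Set (List A) :=
  {x | x ∈ S ∧ w ++ x ∈ S ∧ ∃ y : List A, y ≠ [] ∧ w ++ x = y ++ w}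

/-- The set `R_S(w)` of first right return words to `w`. -/
def firstRet {A : Type*} (S : Set (List A)) (w : List A) : Set (List A) :=
  {x | x ∈ retWords S w ∧ ¬ ∃ y ∈ retWords S w, ∃ z : List A, z ≠ [] ∧ x = y ++ z}

/-- The quantity `m(w) = e(w) - l(w) - r(w) + 1`. -/
noncomputable def mval {A : Type*} (S : Set (List A)) (w : List A) : ℤ :=
  (Set.ncard {p : A × A | p.1 :: (w ++ [p.2]) ∈ S} : ℤ)
    - (Set.ncard {a : A | a :: w ∈ S} : ℤ) - (Set.ncard {b : A | w ++ [b] ∈ S} : ℤ) + 1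

/-- A strong set: factorial and every word is strong or neutral. -/
def SStrong {A : Type*} (S : Set (List A)) : Prop :=
  Factorial S ∧ ∀ w ∈ S, 0 ≤ mval S w

/-- A weak set: factorial and every word is weak or neutral. -/
def SWeak {A : Type*} (S : Set (List A)) : Prop :=
  Factorial S ∧ ∀ w ∈ S, mval S w ≤ 0

/-- A neutral set: factorial and every word is neutral. -/
def SNeutral {A : Type*} (S : Set (List A)) : Prop :=
  Factorial S ∧ ∀ w ∈ S, mval S w = 0

/-- Decoding of a word over `B` through a coding morphism `f : B* → A*`. -/
def decode {A B : Type*} (f : B → List A) (u : List B) : List A := (u.map f).flatten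

/-!
In an acyclic set `S`, every generalized extension graph `E_{U,V}(w)` with `U` a suffix code and
`V` a prefix code is acyclic, and the coding morphism embeds `E_{f⁻¹(S)}(u)` into `E_{X,X}(f(u))`.

To see the first claim, shorten a cycle of `E_{U,V}(w)` until all its words are letters, which
contradicts the acyclicity of some `E(w')`. Let `b u` be a longest left word of the cycle. If every
left word has the form `b' u` with `b'` a letter, moving `u` into the middle word gives a cycle of
`E_{A,V}(u w)`. Otherwise, cut the cycle between two successive left words `b u` and `b' u` and close
it up through `u`. This is again a cycle: since `b u` is longest, no left word lying in between has
`u` as a suffix, and since the left words form a suffix code, `u` has none of them as a suffix.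
Long right words are handled the same way after reversing all words.
-/

section

open SimpleGraph

variable {A : Type*}

section Factorial

variable {S : Set (List A)}

lemma Factorial.mem_of_isSuffix (hS : Factorial S) {u v : List A} (hv : v ∈ S) (h : u <:+ v) :
    u ∈ S := by
  obtain ⟨p, rfl⟩ := h
  exact hS _ hv u ⟨p, [], by simp⟩

lemma Factorial.mem_of_isPrefix (hS : Factorial S) {u v : List A} (hv : v ∈ S) (h : u <+: v) :
    u ∈ S := by
  obtain ⟨s, rfl⟩ := h
  exact hS _ hv u ⟨[], s, by simp⟩

lemma Factorial.preimage_reverse (hS : Factorial S) : Factorial (reverse ⁻¹' S) := by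
  rintro v hv u ⟨p, s, rfl⟩
  exact hS _ hv _ ⟨s.reverse, p.reverse, by simp⟩

end Factorial

lemma Finset.sum_range_add_mod {M : Type*} [AddCommMonoid M] (g : ℕ → M) (n i : ℕ) :
    ∑ k ∈ range n, g ((i + k) % n) = ∑ k ∈ range n, g k := by
  rcases Nat.eq_zero_or_pos n with rfl | hn
  · simp
  have : NeZero n := ⟨hn.ne'⟩
  rw [← Fin.sum_univ_eq_sum_range (fun k => g ((i + k) % n)), ← Fin.sum_univ_eq_sum_range]
  convert Equiv.sum_comp (Equiv.addLeft (Fin.ofNat n i)) (fun k : Fin n => g k) using 2 with k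
  simp [Fin.val_add, Nat.mod_add_mod]

lemma Nat.eq_of_add_mod_eq_add_mod {n i j k : ℕ} (hj : j < n) (hk : k < n)
    (h : (i + j) % n = (i + k) % n) : j = k :=
  (Nat.ModEq.add_left_cancel' i h).eq_of_lt_of_lt hj hk

lemma Nat.exists_mod_succ_not {p : ℕ → Prop} {n i j : ℕ} (hi : i < n) (hpi : p i) (hj : j < n)
    (hpj : ¬ p j) : ∃ k < n, p k ∧ ¬ p ((k + 1) % n) := by
  by_contra! h
  have hall : ∀ t, p ((i + t) % n) := by
    intro t
    induction t with
    | zero => simpa [Nat.mod_eq_of_lt hi] using hpi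
    | succ t ih => simpa only [Nat.mod_add_mod, add_assoc] using h _ (Nat.mod_lt _ (by omega)) ih
  apply hpj
  simpa [show i + (j + n - i) = j + n by omega, Nat.mod_eq_of_lt hj] using hall (j + n - i)

open Fin.NatCast in
theorem SimpleGraph.not_isAcyclic_iff_exists_periodic {V : Type*} {G : SimpleGraph V} :
    ¬ G.IsAcyclic ↔ ∃ m ≥ 3, ∃ g : ℕ → V,
      (∀ i, G.Adj (g i) (g (i + 1))) ∧ ∀ i j, g i = g j ↔ i % m = j % m := by
  simp only [isAcyclic_iff_free_cycleGraph, not_forall, not_not]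
  constructor
  · rintro ⟨m, hm, ⟨φ⟩⟩
    have : NeZero m := ⟨by omega⟩
    refine ⟨m, hm, fun i => φ.toHom (i : Fin m), fun i => φ.toHom.map_adj ?_, fun i j => ?_⟩
    · rw [cycleGraph_adj', Nat.cast_succ, add_sub_cancel_left, Fin.val_one',
        Nat.mod_eq_of_lt (by omega)]
      exact .inr rfl
    · rw [φ.injective'.eq_iff, Fin.ext_iff, Fin.val_natCast, Fin.val_natCast]
  · rintro ⟨m, hm, g, hg_adj, hg_eq⟩
    have : NeZero m := ⟨by omega⟩
    have hsucc : ∀ i j : Fin m, ((j - i : Fin m) : ℕ) = 1 → G.Adj (g i) (g j) := by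
      intro i j h
      rw [(hg_eq j (i + 1)).mpr (by rw [← add_sub_cancel i j, Fin.val_add, h, Nat.mod_mod])]
      exact hg_adj i
    refine ⟨m, hm, ⟨⟨fun i => g i, fun {i j} hij => ?_⟩, fun i j h => Fin.ext ?_⟩⟩
    · exact (cycleGraph_adj'.mp hij).elim (fun h => (hsucc j i h).symm) (hsucc i j)
    · simpa [Nat.mod_eq_of_lt i.2, Nat.mod_eq_of_lt j.2] using (hg_eq i j).mp h

/-- `l 0 — r 0 — l 1 — r 1 — ⋯ — l (n-1) — r (n-1) — l 0` is a closed walk in an extension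
graph of `w`. -/
def CycleEdges (S : Set (List A)) (w : List A) (n : ℕ) (l r : ℕ → List A) : Prop :=
  ∀ k < n, l k ++ w ++ r k ∈ S ∧ l ((k + 1) % n) ++ w ++ r k ∈ S

section ExtGraph

variable {S U V : Set (List A)} {w : List A}

@[simp]
lemma extGraph_adj_inl_inr {l : leftExts S U w} {r : rightExts S V w} :
    (ExtGraph S U V w).Adj (.inl l) (.inr r) ↔ l.val ++ w ++ r.val ∈ S := by
  simp [ExtGraph]

@[simp]
lemma extGraph_adj_inr_inl {l : leftExts S U w} {r : rightExts S V w} :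
    (ExtGraph S U V w).Adj (.inr r) (.inl l) ↔ l.val ++ w ++ r.val ∈ S := by
  simp [ExtGraph]

@[simp]
lemma not_extGraph_adj_inl_inl {l l' : leftExts S U w} :
    ¬ (ExtGraph S U V w).Adj (.inl l) (.inl l') := by
  simp [ExtGraph]

@[simp]
lemma not_extGraph_adj_inr_inr {r r' : rightExts S V w} :
    ¬ (ExtGraph S U V w).Adj (.inr r) (.inr r') := by
  simp [ExtGraph]

lemma ExtGraph.isLeft_eq_not_of_adj {x y : leftExts S U w ⊕ rightExts S V w}
    (h : (ExtGraph S U V w).Adj x y) : y.isLeft = !x.isLeft := by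
  rcases x with x | x <;> rcases y with y | y <;> simp_all

lemma ExtGraph.not_isAcyclic_of_cycleEdges {n : ℕ} {l r : ℕ → List A} (hn : 2 ≤ n)
    (hl : ∀ j < n, ∀ k < n, l j = l k → j = k) (hr : ∀ j < n, ∀ k < n, r j = r k → j = k)
    (hmem : ∀ k < n, l k ∈ leftExts S U w ∧ r k ∈ rightExts S V w)
    (hE : CycleEdges S w n l r) : ¬ (ExtGraph S U V w).IsAcyclic := by
  have hmod : ∀ i, i / 2 % n < n := fun i => Nat.mod_lt _ (by omega)
  let ψ : ℕ → leftExts S U w ⊕ rightExts S V w := fun i =>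
    if i % 2 = 0 then .inl ⟨l (i / 2 % n), (hmem _ (hmod i)).1⟩
    else .inr ⟨r (i / 2 % n), (hmem _ (hmod i)).2⟩
  have hψ_adj : ∀ i, (ExtGraph S U V w).Adj (ψ i) (ψ (i + 1)) := by
    intro i
    obtain ⟨k, rfl | rfl⟩ := Nat.even_or_odd' i
    · simp only [ψ, show (2 * k + 1) / 2 = k by omega, Nat.mul_mod_right, if_true,
        show (2 * k + 1) % 2 = 1 by omega, one_ne_zero, if_false, extGraph_adj_inl_inr]
      simpa only [show 2 * k / 2 = k by omega] using (hE _ (Nat.mod_lt k (by omega))).1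
    · simp only [ψ, show (2 * k + 1 + 1) / 2 = k + 1 by omega, show (2 * k + 1) / 2 = k by omega,
        show (2 * k + 1) % 2 = 1 by omega, show (2 * k + 1 + 1) % 2 = 0 by omega, one_ne_zero,
        if_false, if_true, extGraph_adj_inr_inl]
      simpa only [Nat.add_mod_mod, Nat.mod_add_mod] using (hE _ (Nat.mod_lt k (by omega))).2
  have hψ_mod : ∀ i, ψ (i % (2 * n)) = ψ i := by
    intro i
    simp only [ψ, Nat.mod_mul_right_mod, Nat.mod_mul_right_div_self, Nat.mod_mod]
  have hψ_inj : ∀ i < 2 * n, ∀ j < 2 * n, ψ i = ψ j → i = j := by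
    intro i hi j hj h
    simp only [ψ] at h
    split_ifs at h with hi2 hj2 hj2 <;> simp only [Sum.inl.injEq, Sum.inr.injEq,
      Subtype.mk.injEq] at h
    · have := hl _ (hmod i) _ (hmod j) h
      rw [Nat.mod_eq_of_lt (by omega), Nat.mod_eq_of_lt (by omega)] at this
      omega
    · have := hr _ (hmod i) _ (hmod j) h
      rw [Nat.mod_eq_of_lt (by omega), Nat.mod_eq_of_lt (by omega)] at this
      omega
  refine not_isAcyclic_iff_exists_periodic.mpr ⟨2 * n, by omega, ψ, hψ_adj, fun i j => ⟨?_, ?_⟩⟩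
  · intro h
    rw [← hψ_mod i, ← hψ_mod j] at h
    exact hψ_inj _ (Nat.mod_lt _ (by omega)) _ (Nat.mod_lt _ (by omega)) h
  · intro h
    rw [← hψ_mod i, h, hψ_mod]

lemma ExtGraph.exists_cycleEdges_of_not_isAcyclic (h : ¬ (ExtGraph S U V w).IsAcyclic) :
    ∃ n, ∃ l r : ℕ → List A, 2 ≤ n ∧ (∀ j < n, ∀ k < n, l j = l k → j = k) ∧
      (∀ j < n, ∀ k < n, r j = r k → j = k) ∧
      (∀ k < n, l k ∈ leftExts S U w ∧ r k ∈ rightExts S V w) ∧ CycleEdges S w n l r := by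
  obtain ⟨m, hm, g, hg_adj, hg_eq⟩ := not_isAcyclic_iff_exists_periodic.mp h
  obtain ⟨s, hs⟩ : ∃ s, (g s).isLeft := by
    by_cases h0 : (g 0).isLeft
    · exact ⟨0, h0⟩
    · exact ⟨1, by simpa [h0] using ExtGraph.isLeft_eq_not_of_adj (hg_adj 0)⟩
  have hside : ∀ i, (g (s + i)).isLeft ↔ i % 2 = 0 := by
    intro i
    induction i with
    | zero => simpa using hs
    | succ i ih =>
      rw [← add_assoc, ExtGraph.isLeft_eq_not_of_adj (hg_adj _)]
      cases h : (g (s + i)).isLeft <;> simp [h] at ih ⊢ <;> omega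
  obtain ⟨n, rfl⟩ : ∃ n, m = 2 * n := by
    have := (hside m).mp (by rwa [(hg_eq (s + m) s).mpr (by simp)])
    exact ⟨m / 2, by omega⟩
  have hsides : ∀ k, ∃ a b, g (s + 2 * k) = .inl a ∧ g (s + (2 * k + 1)) = .inr b := by
    intro k
    obtain ⟨a, ha⟩ := Sum.isLeft_iff.mp ((hside (2 * k)).mpr (by omega))
    obtain ⟨b, hb⟩ := Sum.isRight_iff.mp (by
      simpa [Sum.not_isLeft] using (hside (2 * k + 1)).not.mpr (by omega))
    exact ⟨a, b, ha, hb⟩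
  choose a b ha hb using hsides
  have hinj : ∀ i < 2 * n, ∀ i' < 2 * n, g (s + i) = g (s + i') → i = i' := fun i hi i' hi' h =>
    Nat.eq_of_add_mod_eq_add_mod hi hi' ((hg_eq _ _).mp h)
  refine ⟨n, fun k => a k, fun k => b k, by omega, fun j hj k hk h => ?_, fun j hj k hk h => ?_,
    fun k _ => ⟨(a k).2, (b k).2⟩, fun k hk => ?_⟩
  · have := hinj (2 * j) (by omega) (2 * k) (by omega) (by rw [ha j, ha k, Subtype.ext h])
    omega
  · have := hinj (2 * j + 1) (by omega) (2 * k + 1) (by omega) (by rw [hb j, hb k, Subtype.ext h])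
    omega
  · have h1 := hg_adj (s + 2 * k)
    have h2 := hg_adj (s + (2 * k + 1))
    rw [ha k, add_assoc, hb k] at h1
    have hwrap : g (s + (2 * k + 1) + 1) = g (s + 2 * ((k + 1) % n)) := by
      rw [hg_eq, ← Nat.mul_mod_mul_left, Nat.add_mod_mod]
      ring_nf
    rw [hb k, hwrap, ha] at h2
    exact ⟨extGraph_adj_inl_inr.mp h1, extGraph_adj_inr_inl.mp h2⟩

end ExtGraph

/-- A cycle of `CycleEdges` in `E_{U,V}(w)` for some suffix code `U` containing the left words
and some prefix code `V` containing the right words. -/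
structure IsCodeCycle (S : Set (List A)) (w : List A) (n : ℕ) (l r : ℕ → List A) : Prop where
  two_le : 2 ≤ n
  suffix_inj : ∀ j < n, ∀ k < n, l j <:+ l k → j = k
  prefix_inj : ∀ j < n, ∀ k < n, r j <+: r k → j = k
  edges : CycleEdges S w n l r

def cycleWeight (n : ℕ) (l r : ℕ → List A) : ℕ :=
  ∑ k ∈ Finset.range n, ((l k).length + (r k).length)

lemma cycleWeight_rotate (n i : ℕ) (l r : ℕ → List A) :
    cycleWeight n (fun k => l ((i + k) % n)) (fun k => r ((i + k) % n)) = cycleWeight n l r :=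
  Finset.sum_range_add_mod (fun k => (l k).length + (r k).length) n i

lemma cycleWeight_mirror (n : ℕ) (l r : ℕ → List A) :
    cycleWeight n (fun k => (r k).reverse) (fun k => (l ((k + 1) % n)).reverse) =
      cycleWeight n l r := by
  have hshift : ∑ k ∈ Finset.range n, (l ((k + 1) % n)).length =
      ∑ k ∈ Finset.range n, (l k).length := by
    simpa only [add_comm 1] using Finset.sum_range_add_mod (fun k => (l k).length) n 1
  simp only [cycleWeight, length_reverse, Finset.sum_add_distrib, hshift]
  exact add_comm _ _

lemma cycleWeight_update_zero_lt {d n : ℕ} {l r : ℕ → List A} {u : List A} {b : A} (hd : 0 < d)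
    (hdn : d ≤ n) (h0 : l 0 = b :: u) :
    cycleWeight d (Function.update l 0 u) r < cycleWeight n l r :=
  calc cycleWeight d (Function.update l 0 u) r < cycleWeight d l r := by
        refine Finset.sum_lt_sum (fun k _ => ?_) ⟨0, Finset.mem_range.mpr hd, ?_⟩
        · rcases eq_or_ne k 0 with rfl | hk
          · simp [h0]
          · simp [Function.update_of_ne hk]
        · simp [h0]
    _ ≤ cycleWeight n l r :=
        Finset.sum_le_sum_of_subset (Finset.range_subset_range.mpr hdn)

lemma cycleWeight_lt_of_eq_append {n : ℕ} {l a r : ℕ → List A} {u : List A} (hn : 0 < n)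
    (hu : u ≠ []) (hl : ∀ k < n, l k = a k ++ u) : cycleWeight n a r < cycleWeight n l r := by
  refine Finset.sum_lt_sum_of_nonempty ⟨0, Finset.mem_range.mpr hn⟩ fun k hk => ?_
  rw [hl k (Finset.mem_range.mp hk), length_append]
  have := length_pos_iff.mpr hu
  omega

namespace IsCodeCycle

variable {S : Set (List A)} {w : List A} {n : ℕ} {l r : ℕ → List A}

lemma rotate (c : IsCodeCycle S w n l r) (i : ℕ) :
    IsCodeCycle S w n (fun k => l ((i + k) % n)) (fun k => r ((i + k) % n)) := by
  have hlt : ∀ k, (i + k) % n < n := fun k => Nat.mod_lt _ (by linarith [c.two_le])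
  refine ⟨c.two_le, fun j hj k hk h => ?_, fun j hj k hk h => ?_, fun k hk => ?_⟩
  · exact Nat.eq_of_add_mod_eq_add_mod hj hk (c.suffix_inj _ (hlt j) _ (hlt k) h)
  · exact Nat.eq_of_add_mod_eq_add_mod hj hk (c.prefix_inj _ (hlt j) _ (hlt k) h)
  · have := c.edges _ (hlt k)
    simpa only [Nat.mod_add_mod, Nat.add_mod_mod, add_assoc] using this

lemma mirror (c : IsCodeCycle S w n l r) :
    IsCodeCycle (reverse ⁻¹' S) w.reverse n (fun k => (r k).reverse)
      (fun k => (l ((k + 1) % n)).reverse) := by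
  have hlt : ∀ k, (k + 1) % n < n := fun k => Nat.mod_lt _ (by linarith [c.two_le])
  refine ⟨c.two_le, fun j hj k hk h => ?_, fun j hj k hk h => ?_, fun k hk => ?_⟩
  · exact c.prefix_inj j hj k hk (reverse_suffix.mp h)
  · have := c.suffix_inj _ (hlt j) _ (hlt k) (reverse_prefix.mp h)
    exact Nat.eq_of_add_mod_eq_add_mod (i := 1) hj hk (by simpa only [add_comm 1] using this)
  · exact ⟨by simpa using (c.edges k hk).2, by simpa using (c.edges _ (hlt k)).1⟩

lemma strip_left (c : IsCodeCycle S w n l r) {a : ℕ → List A} {u : List A}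
    (hl : ∀ k < n, l k = a k ++ u) : IsCodeCycle S (u ++ w) n a r := by
  have hlt : ∀ k, (k + 1) % n < n := fun k => Nat.mod_lt _ (by linarith [c.two_le])
  refine ⟨c.two_le, fun j hj k hk h => ?_, c.prefix_inj, fun k hk => ?_⟩
  · exact c.suffix_inj j hj k hk (by rw [hl j hj, hl k hk]; exact suffix_append_self_iff.mpr h)
  · have := c.edges k hk
    rw [hl k hk, hl _ (hlt k)] at this
    simpa only [append_assoc] using this

lemma shortcut (hS : Factorial S) (c : IsCodeCycle S w n l r) {d : ℕ} {u : List A} {b b' : A}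
    (hd : 2 ≤ d) (hdn : d ≤ n) (h0 : l 0 = b :: u) (hd' : l (d % n) = b' :: u)
    (hmid : ∀ t, 0 < t → t < d → ¬ u <:+ l t) (hsub : ∀ k < n, ¬ l k <:+ u) :
    IsCodeCycle S w d (Function.update l 0 u) r := by
  refine ⟨hd, fun j hj k hk h => ?_, fun j hj k hk h => c.prefix_inj j (by omega) k (by omega) h,
    fun k hk => ⟨?_, ?_⟩⟩
  · rcases Nat.eq_zero_or_pos j with rfl | hj0 <;> rcases Nat.eq_zero_or_pos k with rfl | hk0
    · rfl
    · simp only [Function.update_self, Function.update_of_ne hk0.ne'] at h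
      exact absurd h (hmid k hk0 hk)
    · simp only [Function.update_self, Function.update_of_ne hj0.ne'] at h
      exact absurd h (hsub j (by omega))
    · simp only [Function.update_of_ne hj0.ne', Function.update_of_ne hk0.ne'] at h
      exact c.suffix_inj j (by omega) k (by omega) h
  · rcases Nat.eq_zero_or_pos k with rfl | hk0
    · simpa only [Function.update_self] using
        hS.mem_of_isSuffix (c.edges 0 (by omega)).1 (by simp [h0])
    · simpa only [Function.update_of_ne hk0.ne'] using (c.edges k (by omega)).1
  · have hE := (c.edges k (by omega)).2
    rcases Nat.lt_or_ge (k + 1) d with hk1 | hk1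
    · rwa [Nat.mod_eq_of_lt hk1, Function.update_of_ne (by omega),
        ← Nat.mod_eq_of_lt (show k + 1 < n by omega)]
    · rw [show k + 1 = d by omega] at hE ⊢
      rw [Nat.mod_self, Function.update_self]
      exact hS.mem_of_isSuffix hE (by simp [hd'])

lemma ne_nil_left (c : IsCodeCycle S w n l r) {k : ℕ} (hk : k < n) : l k ≠ [] := fun h => by
  have h0 := c.suffix_inj k hk 0 (by linarith [c.two_le]) (h ▸ nil_suffix)
  have h1 := c.suffix_inj k hk 1 (by linarith [c.two_le]) (h ▸ nil_suffix)
  omega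

lemma ne_nil_right (c : IsCodeCycle S w n l r) {k : ℕ} (hk : k < n) : r k ≠ [] := fun h => by
  have h0 := c.prefix_inj k hk 0 (by linarith [c.two_le]) (h ▸ nil_prefix)
  have h1 := c.prefix_inj k hk 1 (by linarith [c.two_le]) (h ▸ nil_prefix)
  omega

lemma exists_lt_of_not_forall_cons (hS : Factorial S) (c : IsCodeCycle S w n l r) {u : List A}
    (hsub : ∀ k < n, ¬ l k <:+ u) (hup : ∀ k < n, u <:+ l k → ∃ b, l k = b :: u)
    {i₀ i₁ : ℕ} (hi₀ : i₀ < n) (hu₀ : ∃ b, l i₀ = b :: u) (hi₁ : i₁ < n)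
    (hu₁ : ¬ ∃ b, l i₁ = b :: u) :
    ∃ w' n', ∃ l' r' : ℕ → List A,
      IsCodeCycle S w' n' l' r' ∧ cycleWeight n' l' r' < cycleWeight n l r := by
  classical
  obtain ⟨i, hi, ⟨b, hb⟩, hu_succ⟩ :=
    Nat.exists_mod_succ_not (p := fun k => ∃ b, l k = b :: u) hi₀ hu₀ hi₁ hu₁
  have hex : ∃ d, 0 < d ∧ ∃ b, l ((i + d) % n) = b :: u :=
    ⟨n, by omega, b, by rwa [Nat.add_mod_right, Nat.mod_eq_of_lt hi]⟩
  obtain ⟨hd, b', hb'⟩ := Nat.find_spec hex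
  have hdn : Nat.find hex ≤ n :=
    Nat.find_min' hex ⟨by omega, b, by rwa [Nat.add_mod_right, Nat.mod_eq_of_lt hi]⟩
  have hd2 : 2 ≤ Nat.find hex := by
    by_contra! h
    rw [show Nat.find hex = 1 by omega] at hb'
    exact hu_succ ⟨b', hb'⟩
  have hmid : ∀ t, 0 < t → t < Nat.find hex → ¬ u <:+ l ((i + t) % n) := fun t ht htd h =>
    Nat.find_min hex htd ⟨ht, hup _ (Nat.mod_lt _ (by omega)) h⟩
  have h₀ : l ((i + 0) % n) = b :: u := by rwa [add_zero, Nat.mod_eq_of_lt hi]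
  refine ⟨w, _, _, _, (c.rotate i).shortcut hS hd2 hdn h₀ (b' := b') ?_ hmid
    (fun k _ => hsub _ (Nat.mod_lt _ (by omega))),
    (cycleWeight_update_zero_lt (by omega) hdn h₀).trans_eq (cycleWeight_rotate n i l r)⟩
  rwa [Nat.add_mod_mod]

lemma exists_lt_of_two_le_length_left (hS : Factorial S) (c : IsCodeCycle S w n l r)
    (hlong : ∃ k < n, 2 ≤ (l k).length) :
    ∃ w' n', ∃ l' r' : ℕ → List A,
      IsCodeCycle S w' n' l' r' ∧ cycleWeight n' l' r' < cycleWeight n l r := by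
  obtain ⟨i₀, hi₀, hmax⟩ := Finset.exists_max_image (Finset.range n) (fun k => (l k).length)
    ⟨0, Finset.mem_range.mpr (by linarith [c.two_le])⟩
  simp only [Finset.mem_range] at hi₀ hmax
  obtain ⟨b₀, u, hu₀⟩ := exists_cons_of_ne_nil (c.ne_nil_left hi₀)
  have hu : u ≠ [] := by
    obtain ⟨k, hk, hk2⟩ := hlong
    have := hmax k hk
    rintro rfl
    simp only [hu₀, length_singleton] at this
    omega
  have hsub : ∀ k < n, ¬ l k <:+ u := fun k hk h => by
    obtain rfl := c.suffix_inj k hk i₀ hi₀ (h.trans (hu₀ ▸ suffix_cons b₀ u))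
    simpa [hu₀] using h.length_le
  have hup : ∀ k < n, u <:+ l k → ∃ b, l k = b :: u := by
    rintro k hk ⟨t, ht⟩
    have hlen := hmax k hk
    rw [← ht, hu₀, length_append, length_cons] at hlen
    obtain rfl | ⟨b, rfl⟩ : t = [] ∨ ∃ b, t = [b] := by
      rcases t with _ | ⟨b, _ | _⟩ <;> simp_all; omega
    · exact absurd (ht ▸ suffix_refl u) (hsub k hk)
    · exact ⟨b, ht.symm⟩
  by_cases hall : ∀ k < n, ∃ b, l k = b :: u
  · have hl : ∀ k < n, l k = (l k).take 1 ++ u := fun k hk => by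
      obtain ⟨b, hb⟩ := hall k hk
      simp [hb]
    exact ⟨u ++ w, n, _, r, c.strip_left hl,
      cycleWeight_lt_of_eq_append (by linarith [c.two_le]) hu hl⟩
  push Not at hall
  obtain ⟨i₁, hi₁, hu₁⟩ := hall
  exact c.exists_lt_of_not_forall_cons hS hsub hup hi₀ ⟨b₀, hu₀⟩ hi₁ (by simpa using hu₁)

lemma exists_lt_of_two_le_length_right (hS : Factorial S) (c : IsCodeCycle S w n l r)
    (hlong : ∃ k < n, 2 ≤ (r k).length) :
    ∃ w' n', ∃ l' r' : ℕ → List A,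
      IsCodeCycle S w' n' l' r' ∧ cycleWeight n' l' r' < cycleWeight n l r := by
  obtain ⟨w', n', l', r', c', hlt⟩ :=
    c.mirror.exists_lt_of_two_le_length_left hS.preimage_reverse (by simpa using hlong)
  have hSS : reverse ⁻¹' (reverse ⁻¹' S) = S := by ext; simp
  refine ⟨w'.reverse, n', _, _, hSS ▸ c'.mirror, ?_⟩
  rwa [cycleWeight_mirror, ← cycleWeight_mirror n l r]

lemma exists_length_eq_one (hS : Factorial S) (c : IsCodeCycle S w n l r) :
    ∃ w' n', ∃ l' r' : ℕ → List A, IsCodeCycle S w' n' l' r' ∧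
      ∀ k < n', (l' k).length = 1 ∧ (r' k).length = 1 := by
  induction hN : cycleWeight n l r using Nat.strong_induction_on generalizing w n l r with
  | _ N ih =>
  by_cases hl : ∃ k < n, 2 ≤ (l k).length
  · obtain ⟨w', n', l', r', c', hlt⟩ := c.exists_lt_of_two_le_length_left hS hl
    exact ih _ (hN ▸ hlt) c' rfl
  by_cases hr : ∃ k < n, 2 ≤ (r k).length
  · obtain ⟨w', n', l', r', c', hlt⟩ := c.exists_lt_of_two_le_length_right hS hr
    exact ih _ (hN ▸ hlt) c' rfl
  push Not at hl hr
  refine ⟨w, n, l, r, c, fun k hk => ⟨?_, ?_⟩⟩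
  · have := length_pos_iff.mpr (c.ne_nil_left hk)
    linarith [hl k hk]
  · have := length_pos_iff.mpr (c.ne_nil_right hk)
    linarith [hr k hk]

lemma not_isAcyclic_eGraph (hS : Factorial S) (c : IsCodeCycle S w n l r)
    (h1 : ∀ k < n, (l k).length = 1 ∧ (r k).length = 1) : ¬ (EGraph S w).IsAcyclic := by
  refine ExtGraph.not_isAcyclic_of_cycleEdges c.two_le
    (fun j hj k hk (h : l j = l k) => c.suffix_inj j hj k hk (h ▸ suffix_refl _))
    (fun j hj k hk (h : r j = r k) => c.prefix_inj j hj k hk (h ▸ prefix_refl _))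
    (fun k hk => ⟨⟨?_, ?_⟩, ⟨?_, ?_⟩⟩) c.edges
  · obtain ⟨a, ha⟩ := length_eq_one_iff.mp (h1 k hk).1
    exact ⟨a, ha.symm⟩
  · exact hS.mem_of_isPrefix (c.edges k hk).1 (prefix_append _ _)
  · obtain ⟨a, ha⟩ := length_eq_one_iff.mp (h1 k hk).2
    exact ⟨a, ha.symm⟩
  · exact hS.mem_of_isSuffix (c.edges k hk).1 (by simp)

end IsCodeCycle

theorem SAcyclic.extGraph_isAcyclic {S U V : Set (List A)} (hS : SAcyclic S)
    (hU : IsSuffixCode U) (hV : IsPrefixCode V) (w : List A) : (ExtGraph S U V w).IsAcyclic := by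
  by_contra h
  obtain ⟨n, l, r, hn, hl, hr, hmem, hE⟩ := ExtGraph.exists_cycleEdges_of_not_isAcyclic h
  have c : IsCodeCycle S w n l r :=
    ⟨hn, fun j hj k hk h => hl j hj k hk (hU.2 _ (hmem j hj).1.1 _ (hmem k hk).1.1 h),
      fun j hj k hk h => hr j hj k hk (hV.2 _ (hmem j hj).2.1 _ (hmem k hk).2.1 h), hE⟩
  obtain ⟨w', n', l', r', c', h1⟩ := c.exists_length_eq_one hS.1.1
  have hw' : w' ∈ S := hS.1.1 _ (c'.edges 0 (by linarith [c'.two_le])).1 w' ⟨l' 0, r' 0, rfl⟩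
  exact c'.not_isAcyclic_eGraph hS.1.1 h1 (hS.2 w' hw')

section Decode

variable {B : Type*} (f : B → List A)

@[simp]
lemma decode_append (u v : List B) : decode f (u ++ v) = decode f u ++ decode f v := by
  simp [decode]

@[simp]
lemma decode_singleton (b : B) : decode f [b] = f b := by
  simp [decode]

lemma decode_mem_range_of_mem_letterWords {x : List B} (hx : x ∈ letterWords B) :
    decode f x ∈ Set.range f := by
  obtain ⟨b, rfl⟩ := hx
  exact ⟨b, (decode_singleton f b).symm⟩

/-- The coding morphism maps `E_{f⁻¹(S)}(u)` into `E_{X,X}(f(u))`, where `X = range f`. -/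
def decodeEGraphHom (S : Set (List A)) (u : List B) :
    EGraph {v | decode f v ∈ S} u →g ExtGraph S (Set.range f) (Set.range f) (decode f u) where
  toFun := Sum.map
    (fun x => ⟨decode f x, decode_mem_range_of_mem_letterWords f x.2.1, by simpa using x.2.2⟩)
    (fun y => ⟨decode f y, decode_mem_range_of_mem_letterWords f y.2.1, by simpa using y.2.2⟩)
  map_rel' := by
    rintro (x | x) (y | y) h <;> simp_all [EGraph]

lemma decode_injOn_letterWords (hf : Function.Injective f) :
    Set.InjOn (decode f) (letterWords B) := by
  rintro _ ⟨a, rfl⟩ _ ⟨b, rfl⟩ h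
  rw [hf (by simpa using h : f a = f b)]

lemma decodeEGraphHom_injective (hf : Function.Injective f) (S : Set (List A)) (u : List B) :
    Function.Injective (decodeEGraphHom f S u) :=
  Sum.map_injective.mpr
    ⟨fun x y h => Subtype.ext (decode_injOn_letterWords f hf x.2.1 y.2.1 (congrArg Subtype.val h)),
      fun x y h => Subtype.ext (decode_injOn_letterWords f hf x.2.1 y.2.1 (congrArg Subtype.val h))⟩

end Decode

end

theorem statement13_general {A B : Type*} (S X : Set (List A))
    (f : B → List A) (hS : SAcyclic S)
    (hX : IsBifixCode X) (hinj : Function.Injective f) (hran : Set.range f = X)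
    (hbe : Biext {u : List B | decode f u ∈ S}) :
    SAcyclic {u : List B | decode f u ∈ S} := by
  subst hran
  refine ⟨hbe, fun u _ => ?_⟩
  exact (hS.extGraph_isAcyclic hX.2 hX.1 (decode f u)).comap (decodeEGraphHom f S u)
    (decodeEGraphHom_injective f hinj S u)

/-- Any biextendable bifix decoding of an acyclic set is acyclic. -/
theorem statement13 {A B : Type*} [Fintype A] [Fintype B] (S X : Set (List A))
    (f : B → List A) (hS : SAcyclic S) (hXS : X ⊆ S) (hXfin : X.Finite)
    (hX : IsBifixCode X) (hinj : Function.Injective f) (hran : Set.range f = X)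
    (hbe : Biext {u : List B | decode f u ∈ S}) :
    SAcyclic {u : List B | decode f u ∈ S} :=
  statement13_general S X f hS hX hinj hran hbe
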